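/- Let n ≥ 1 and let u_0,…,u_n : ℂ∖{0} → ℝ be twice continuously differentiable with u_j + u_{n−j} = 0 for all j. Define, for z ∈ ℂ∖{0}, the (n+1)×(n+1) matrices: Φ(z) with entries e^{(u_j − u_{j−1})/2}/z in positions (j,j−1) for 1 ≤ j ≤ n, entry e^{(u_0 − u_n)/2} in position (0,n), zeros elsewhere; A'(z) = ½ diag((u_0)_z,…,(u_n)_z) and A''(z) = −½ diag((u_0)_{z̄},…,(u_n)_{z̄}); and c(X) the matrix with entries c(X)_{ij} = conj(X_{n−i,n−j}). Then the Hitchin equations ∂_z A'' − ∂_{z̄} A' + [A', A''] + [Φ, c(Φ)] = 0 and ∂_{z̄} Φ + [A'', Φ] = 0 hold on ℂ∖{0} if and only if the u_j solve the tt*-Toda system: (u_0)_{zz̄} = e^{u_0−u_n} − |z|^{−2} e^{u_1−u_0}; (u_j)_{zz̄} = |z|^{−2} e^{u_j−u_{j−1}} − |z|^{−2} e^{u_{j+1}−u_j} for 1 ≤ j ≤ n−1; (u_n)_{zz̄} = |z|^{−2} e^{u_n−u_{n−1}} − e^{u_0−u_n}. -/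

import Mathlib

/-- The Wirtinger derivative `f_z = ½(∂f/∂x − i ∂f/∂y)`. -/
noncomputable def wirtingerDz (f : ℂ → ℂ) (z : ℂ) : ℂ :=
  (fderiv ℝ f z 1 - Complex.I * fderiv ℝ f z Complex.I) / 2

/-- The Wirtinger derivative `f_z̄ = ½(∂f/∂x + i ∂f/∂y)`. -/
noncomputable def wirtingerDzbar (f : ℂ → ℂ) (z : ℂ) : ℂ :=
  (fderiv ℝ f z 1 + Complex.I * fderiv ℝ f z Complex.I) / 2

/-- `u_{zz̄}` for a real-valued function `u`. -/
noncomputable def uzzbar (u : ℂ → ℝ) (z : ℂ) : ℂ :=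
  wirtingerDzbar (fun w => wirtingerDz (fun x => ((u x : ℝ) : ℂ)) w) z

/-- The Higgs field `Φ(z)`: entries `e^{(u_j−u_{j−1})/2}/z` in positions `(j,j−1)`
for `1 ≤ j ≤ n`, entry `e^{(u_0−u_n)/2}` in position `(0,n)`, zeros elsewhere. -/
noncomputable def higgsMat (n : ℕ) (u : Fin (n + 1) → ℂ → ℝ) (z : ℂ) :
    Matrix (Fin (n + 1)) (Fin (n + 1)) ℂ :=
  Matrix.of fun i j =>
    if (i : ℕ) = 0 ∧ (j : ℕ) = n then (Real.exp ((u 0 z - u (Fin.last n) z) / 2) : ℂ)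
    else if (i : ℕ) = (j : ℕ) + 1 then (Real.exp ((u i z - u j z) / 2) : ℂ) / z
    else 0

/-- `A'(z) = ½ diag((u_0)_z,…,(u_n)_z)`. -/
noncomputable def AprimeMat (n : ℕ) (u : Fin (n + 1) → ℂ → ℝ) (z : ℂ) :
    Matrix (Fin (n + 1)) (Fin (n + 1)) ℂ :=
  (1 / 2 : ℂ) • Matrix.diagonal (fun j => wirtingerDz (fun w => ((u j w : ℝ) : ℂ)) z)

/-- `A''(z) = −½ diag((u_0)_{z̄},…,(u_n)_{z̄})`. -/
noncomputable def AdoubleMat (n : ℕ) (u : Fin (n + 1) → ℂ → ℝ) (z : ℂ) :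
    Matrix (Fin (n + 1)) (Fin (n + 1)) ℂ :=
  (-(1 / 2) : ℂ) • Matrix.diagonal (fun j => wirtingerDzbar (fun w => ((u j w : ℝ) : ℂ)) z)

/-- The conjugation `c(X)_{ij} = conj(X_{n−i,n−j})`. -/
def cConj (n : ℕ) (X : Matrix (Fin (n + 1)) (Fin (n + 1)) ℂ) :
    Matrix (Fin (n + 1)) (Fin (n + 1)) ℂ :=
  Matrix.of fun i j => starRingEnd ℂ (X (Fin.rev i) (Fin.rev j))

/-! The second Hitchin equation holds identically: `Φ = D P` with `P` the cyclic shift and `D`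
diagonal with entries `e^{(u_i − u_{i−1})/2}` times `1` or the holomorphic `1/z`, so
`∂_z̄ Φ_{i,i−1} = ½ ((u_i)_z̄ − (u_{i−1})_z̄) Φ_{i,i−1}`, which is exactly what `[A'', Φ]` cancels.
In the first equation `[A', A''] = 0` (both diagonal) and `∂_z A'' − ∂_z̄ A' = −diag((u_i)_{zz̄})`
by symmetry of second derivatives. The antisymmetry `u_j + u_{n−j} = 0` makes `c(Φ) = Φᴴ`, and
since `P` is unitary, `[Φ, Φᴴ] = diag(|D_i|² − |D_{i+1}|²)`: the right-hand side of the
tt*-Toda system. -/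

open Matrix ComplexConjugate

section Wirtinger

variable {f g h : ℂ → ℂ} {z : ℂ}

@[simp] lemma wirtingerDz_const (c z : ℂ) : wirtingerDz (fun _ => c) z = 0 := by
  simp [wirtingerDz]

@[simp] lemma wirtingerDzbar_const (c z : ℂ) : wirtingerDzbar (fun _ => c) z = 0 := by
  simp [wirtingerDzbar]

lemma wirtingerDz_const_mul (c : ℂ) (f : ℂ → ℂ) (z : ℂ) :
    wirtingerDz (fun w => c * f w) z = c * wirtingerDz f z := by
  rw [wirtingerDz, wirtingerDz, show (fun w => c * f w) = c • f from rfl,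
    fderiv_const_smul_field]
  simp only [Pi.smul_apply, _root_.smul_apply, smul_eq_mul]
  ring

lemma wirtingerDzbar_const_mul (c : ℂ) (f : ℂ → ℂ) (z : ℂ) :
    wirtingerDzbar (fun w => c * f w) z = c * wirtingerDzbar f z := by
  rw [wirtingerDzbar, wirtingerDzbar, show (fun w => c * f w) = c • f from rfl,
    fderiv_const_smul_field]
  simp only [Pi.smul_apply, _root_.smul_apply, smul_eq_mul]
  ring

lemma wirtingerDzbar_sub (hf : DifferentiableAt ℝ f z) (hg : DifferentiableAt ℝ g z) :
    wirtingerDzbar (fun w => f w - g w) z = wirtingerDzbar f z - wirtingerDzbar g z := by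
  simp only [wirtingerDzbar, fderiv_fun_sub hf hg, _root_.sub_apply]
  ring

lemma wirtingerDzbar_cexp_mul (hg : DifferentiableAt ℝ g z) (hh : DifferentiableAt ℂ h z) :
    wirtingerDzbar (fun w => Complex.exp (g w) * h w) z
      = wirtingerDzbar g z * (Complex.exp (g z) * h z) := by
  have hI : fderiv ℂ h z Complex.I = Complex.I * fderiv ℂ h z 1 := by
    rw [← smul_eq_mul Complex.I, ← map_smul, smul_eq_mul, mul_one]
  rw [wirtingerDzbar, wirtingerDzbar,
    (hg.hasFDerivAt.cexp.fun_mul (hh.hasFDerivAt.restrictScalars ℝ)).fderiv]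
  simp only [_root_.add_apply, _root_.smul_apply, smul_eq_mul,
    ContinuousLinearMap.coe_restrictScalars', hI]
  linear_combination (Complex.exp (g z) * fderiv ℂ h z 1 / 2) * Complex.I_mul_I

theorem ContDiffAt.wirtingerDz_wirtingerDzbar (hf : ContDiffAt ℝ 2 f z) :
    wirtingerDz (wirtingerDzbar f) z = wirtingerDzbar (wirtingerDz f) z := by
  have h1 : DifferentiableAt ℝ (fderiv ℝ f) z :=
    (hf.fderiv_right (m := 1) (by norm_num)).differentiableAt one_ne_zero
  have hd : ∀ v, HasFDerivAt (fun x => fderiv ℝ f x v) ((fderiv ℝ (fderiv ℝ f) z).flip v) z :=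
    fun v => h1.hasFDerivAt.clm_apply (hasFDerivAt_const v z) |>.congr_fderiv (by ext; simp)
  have hz := (((hd 1).sub ((hd Complex.I).const_mul Complex.I)).mul_const 2⁻¹).fderiv
  have hzbar := (((hd 1).add ((hd Complex.I).const_mul Complex.I)).mul_const 2⁻¹).fderiv
  simp only [← div_eq_mul_inv, Pi.add_apply, Pi.sub_apply] at hz hzbar
  unfold wirtingerDz wirtingerDzbar
  rw [hz, hzbar]
  simp only [_root_.add_apply, _root_.sub_apply, _root_.smul_apply, ContinuousLinearMap.flip_apply,
    smul_eq_mul]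
  rw [hf.isSymmSndFDerivAt (by simp) 1 Complex.I]
  ring

end Wirtinger

theorem Matrix.commutator_conjTranspose_diagonal_mul_permMatrix {ι R : Type*} [Fintype ι]
    [DecidableEq ι] [CommRing R] [StarRing R] (σ : Equiv.Perm ι) (b : ι → R) :
    let X := diagonal b * σ.permMatrix R
    X * Xᴴ - Xᴴ * X = diagonal fun i => b i * star (b i) - b (σ⁻¹ i) * star (b (σ⁻¹ i)) := by
  intro X
  have hXH : Xᴴ = (σ⁻¹).permMatrix R * diagonal (star b) := by
    simp [X, conjTranspose_mul]
  have hP : σ.permMatrix R * (σ⁻¹).permMatrix R = 1 := by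
    rw [← permMatrix_mul, inv_mul_cancel, permMatrix_one]
  have h1 : X * Xᴴ = diagonal fun i => b i * star (b i) := by
    rw [hXH, Matrix.mul_assoc, ← Matrix.mul_assoc (σ.permMatrix R), hP, Matrix.one_mul,
      diagonal_mul_diagonal]
    rfl
  have h2 : Xᴴ * X = diagonal fun i => b (σ⁻¹ i) * star (b (σ⁻¹ i)) := by
    rw [hXH, Matrix.mul_assoc, ← Matrix.mul_assoc (diagonal _), diagonal_mul_diagonal,
      PEquiv.toMatrix_toPEquiv_mul, PEquiv.mul_toMatrix_toPEquiv, submatrix_submatrix]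
    ext i j
    simp [diagonal_apply, mul_comm]
  rw [h1, h2, diagonal_sub]

lemma Fin.neg_one_eq_last (n : ℕ) : (-1 : Fin (n + 1)) = Fin.last n :=
  neg_eq_iff_add_eq_zero.2 ((add_comm _ _).trans (Fin.last_add_one n))

lemma Fin.eq_add_one_iff_val {n : ℕ} (i j : Fin (n + 1)) :
    i = j + 1 ↔ ((i : ℕ) = 0 ∧ (j : ℕ) = n) ∨ (i : ℕ) = j + 1 := by
  rw [Fin.ext_iff, Fin.val_add_one]
  split_ifs with h
  · rw [h, Fin.val_last]; omega
  · have := Fin.val_lt_last h; omega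

section Toda

variable {n : ℕ} (u : Fin (n + 1) → ℂ → ℝ)

/-- The entry `Φ_{i,i-1}` of the Higgs field, indices mod `n + 1`. -/
noncomputable def higgsCoeff (i : Fin (n + 1)) (w : ℂ) : ℂ :=
  (Real.exp ((u i w - u (i - 1) w) / 2) : ℂ) * if i = 0 then 1 else w⁻¹

/-- `|Φ_{i,i-1}|²`; the tt*-Toda system reads `(u_i)_{zz̄} = todaWeight i - todaWeight (i + 1)`. -/
noncomputable def todaWeight (z : ℂ) (i : Fin (n + 1)) : ℂ :=
  (if i = 0 then 1 else ((‖z‖ : ℂ) ^ 2)⁻¹) * Real.exp (u i z - u (i - 1) z)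

lemma higgsMat_eq_diagonal_mul_permMatrix (z : ℂ) :
    higgsMat n u z = diagonal (fun i => higgsCoeff u i z)
      * Equiv.Perm.permMatrix ℂ (Equiv.subRight 1) := by
  ext i j
  have key : i - 1 = j ↔ ((i : ℕ) = 0 ∧ (j : ℕ) = n) ∨ (i : ℕ) = j + 1 :=
    sub_eq_iff_eq_add.trans (Fin.eq_add_one_iff_val i j)
  simp only [higgsMat, higgsCoeff, of_apply, diagonal_mul, PEquiv.toMatrix_apply,
    Equiv.toPEquiv_apply, Equiv.subRight_apply, Option.mem_def, Option.some.injEq]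
  by_cases hij : i - 1 = j
  · subst hij
    by_cases hi : i = 0
    · subst hi
      simp [Fin.neg_one_eq_last]
    · have hi' : (i : ℕ) ≠ 0 := fun h => hi (Fin.ext h)
      rw [if_neg (fun h => hi' h.1), if_pos ((key.1 rfl).resolve_left fun h => hi' h.1),
        if_neg hi, if_pos rfl, div_eq_mul_inv, mul_one]
  · rw [if_neg fun h => hij (key.2 (Or.inl h)), if_neg fun h => hij (key.2 (Or.inr h)),
      if_neg hij, mul_zero]

lemma ttToda_iff (hn : 1 ≤ n) (z : ℂ) :
    ((uzzbar (u 0) z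
            = (Real.exp (u 0 z - u (Fin.last n) z) : ℂ)
              - ((‖z‖ : ℂ) ^ 2)⁻¹ * (Real.exp (u 1 z - u 0 z) : ℂ))
        ∧ (∀ j : Fin (n + 1), 1 ≤ (j : ℕ) → (j : ℕ) ≤ n - 1 →
            uzzbar (u j) z
              = ((‖z‖ : ℂ) ^ 2)⁻¹ * (Real.exp (u j z - u (j - 1) z) : ℂ)
                - ((‖z‖ : ℂ) ^ 2)⁻¹ * (Real.exp (u (j + 1) z - u j z) : ℂ))
        ∧ (uzzbar (u (Fin.last n)) z
            = ((‖z‖ : ℂ) ^ 2)⁻¹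
                * (Real.exp (u (Fin.last n) z - u (Fin.last n - 1) z) : ℂ)
              - (Real.exp (u 0 z - u (Fin.last n) z) : ℂ)))
      ↔ ∀ i, uzzbar (u i) z = todaWeight u z i - todaWeight u z (i + 1) := by
  have hone : (1 : Fin (n + 1)) ≠ 0 := by
    rw [Ne, Fin.ext_iff, Fin.val_one', Fin.val_zero, Nat.one_mod_eq_zero_iff]
    omega
  have hlast0 : Fin.last n ≠ 0 := by
    rw [Ne, Fin.ext_iff, Fin.val_last, Fin.val_zero]
    omega
  have hmid : ∀ j : Fin (n + 1), 1 ≤ (j : ℕ) → (j : ℕ) ≤ n - 1 → j ≠ 0 ∧ j + 1 ≠ 0 := by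
    intro j hj1 hj2
    refine ⟨fun h => by simp [h] at hj1, ?_⟩
    rw [Ne, Fin.ext_iff, Fin.val_add_one]
    split_ifs with h
    · rw [h, Fin.val_last] at hj2
      omega
    · simp
  have h0 : uzzbar (u 0) z = todaWeight u z 0 - todaWeight u z (0 + 1) ↔
      uzzbar (u 0) z = (Real.exp (u 0 z - u (Fin.last n) z) : ℂ)
        - ((‖z‖ : ℂ) ^ 2)⁻¹ * (Real.exp (u 1 z - u 0 z) : ℂ) := by
    simp [todaWeight, Fin.neg_one_eq_last, hone]
  have hl : uzzbar (u (Fin.last n)) z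
        = todaWeight u z (Fin.last n) - todaWeight u z (Fin.last n + 1) ↔
      uzzbar (u (Fin.last n)) z = ((‖z‖ : ℂ) ^ 2)⁻¹
        * (Real.exp (u (Fin.last n) z - u (Fin.last n - 1) z) : ℂ)
        - (Real.exp (u 0 z - u (Fin.last n) z) : ℂ) := by
    simp [todaWeight, Fin.neg_one_eq_last, hlast0]
  have hj : ∀ j : Fin (n + 1), 1 ≤ (j : ℕ) → (j : ℕ) ≤ n - 1 →
      (uzzbar (u j) z = todaWeight u z j - todaWeight u z (j + 1) ↔
        uzzbar (u j) z = ((‖z‖ : ℂ) ^ 2)⁻¹ * (Real.exp (u j z - u (j - 1) z) : ℂ)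
          - ((‖z‖ : ℂ) ^ 2)⁻¹ * (Real.exp (u (j + 1) z - u j z) : ℂ)) := by
    intro j hj1 hj2
    simp [todaWeight, hmid j hj1 hj2]
  constructor
  · rintro ⟨h0', hj', hl'⟩ i
    by_cases hi0 : i = 0
    · subst hi0
      exact h0.2 h0'
    by_cases hil : i = Fin.last n
    · subst hil
      exact hl.2 hl'
    have hi1 : 1 ≤ (i : ℕ) := Nat.one_le_iff_ne_zero.2 (fun h => hi0 (Fin.ext h))
    have hi2 : (i : ℕ) ≤ n - 1 := by
      have := Fin.val_lt_last hil
      omega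
    exact (hj i hi1 hi2).2 (hj' i hi1 hi2)
  · intro h
    exact ⟨h0.1 (h 0), fun j hj1 hj2 => (hj j hj1 hj2).1 (h j), hl.1 (h _)⟩

variable {u} {z : ℂ}

lemma higgsMat_rev_rev (hanti : ∀ k, u k z + u (Fin.rev k) z = 0) (i j : Fin (n + 1)) :
    higgsMat n u z (Fin.rev i) (Fin.rev j) = higgsMat n u z j i := by
  have e : u (Fin.rev i) z - u (Fin.rev j) z = u j z - u i z := by
    linarith [hanti i, hanti j]
  have hi := i.isLt
  have hj := j.isLt
  simp only [higgsMat, of_apply, Fin.val_rev, e]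
  split_ifs <;> first | rfl | omega

lemma cConj_higgsMat (hanti : ∀ k, u k z + u (Fin.rev k) z = 0) :
    cConj n (higgsMat n u z) = (higgsMat n u z)ᴴ := by
  ext i j
  rw [cConj, of_apply, higgsMat_rev_rev hanti, conjTranspose_apply, starRingEnd_apply]

lemma higgsCoeff_mul_conj (i : Fin (n + 1)) :
    higgsCoeff u i z * conj (higgsCoeff u i z) = todaWeight u z i := by
  have hexp : (Real.exp ((u i z - u (i - 1) z) / 2) : ℂ) * Real.exp ((u i z - u (i - 1) z) / 2)
      = Real.exp (u i z - u (i - 1) z) := by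
    rw [← Complex.ofReal_mul, ← Real.exp_add, add_halves]
  have hz : z⁻¹ * conj z⁻¹ = ((‖z‖ : ℂ) ^ 2)⁻¹ := by
    rw [map_inv₀, ← mul_inv, Complex.mul_conj']
  simp only [higgsCoeff, todaWeight, map_mul, Complex.conj_ofReal]
  split_ifs
  · simp only [map_one, mul_one, one_mul, hexp]
  · rw [← hz, ← hexp]; ring

lemma higgsMat_commutator (hanti : ∀ k, u k z + u (Fin.rev k) z = 0) :
    higgsMat n u z * cConj n (higgsMat n u z) - cConj n (higgsMat n u z) * higgsMat n u z
      = diagonal fun i => todaWeight u z i - todaWeight u z (i + 1) := by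
  rw [cConj_higgsMat hanti, higgsMat_eq_diagonal_mul_permMatrix,
    commutator_conjTranspose_diagonal_mul_permMatrix]
  simp only [← starRingEnd_apply, higgsCoeff_mul_conj, Equiv.Perm.inv_def,
    Equiv.subRight_symm_apply]

lemma commute_AprimeMat_AdoubleMat : Commute (AprimeMat n u z) (AdoubleMat n u z) :=
  ((commute_diagonal _ _).smul_left _).smul_right _

lemma wirtingerDz_AdoubleMat_sub_wirtingerDzbar_AprimeMat (i j : Fin (n + 1))
    (hu : ContDiffAt ℝ 2 (fun w => (u i w : ℂ)) z) :
    wirtingerDz (fun w => AdoubleMat n u w i j) z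
        - wirtingerDzbar (fun w => AprimeMat n u w i j) z
      = -diagonal (fun k => uzzbar (u k) z) i j := by
  rcases eq_or_ne i j with rfl | hij
  · simp only [AdoubleMat, AprimeMat, Matrix.smul_apply, diagonal_apply_eq, smul_eq_mul,
      wirtingerDz_const_mul, wirtingerDzbar_const_mul, hu.wirtingerDz_wirtingerDzbar, uzzbar]
    ring
  · simp [AdoubleMat, AprimeMat, hij]

lemma hitchin_first_iff (hu : ∀ k, ContDiffAt ℝ 2 (fun w => (u k w : ℂ)) z)
    (hanti : ∀ k, u k z + u (Fin.rev k) z = 0) :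
    (∀ i j : Fin (n + 1),
        wirtingerDz (fun w => AdoubleMat n u w i j) z
          - wirtingerDzbar (fun w => AprimeMat n u w i j) z
          + ((AprimeMat n u z * AdoubleMat n u z - AdoubleMat n u z * AprimeMat n u z)
              + (higgsMat n u z * cConj n (higgsMat n u z)
                  - cConj n (higgsMat n u z) * higgsMat n u z)) i j
          = 0)
      ↔ ∀ i, uzzbar (u i) z = todaWeight u z i - todaWeight u z (i + 1) := by
  rw [commute_AprimeMat_AdoubleMat.eq, sub_self, zero_add, higgsMat_commutator hanti]
  simp only [wirtingerDz_AdoubleMat_sub_wirtingerDzbar_AprimeMat _ _ (hu _)]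
  constructor
  · intro h i
    have hi := h i i
    rw [diagonal_apply_eq, diagonal_apply_eq] at hi
    linear_combination -hi
  · intro h i j
    rcases eq_or_ne i j with rfl | hij
    · simp [h i]
    · simp [hij]

lemma wirtingerDzbar_higgsCoeff (hz : z ≠ 0) {i : Fin (n + 1)}
    (hi : DifferentiableAt ℝ (fun w => (u i w : ℂ)) z)
    (hi' : DifferentiableAt ℝ (fun w => (u (i - 1) w : ℂ)) z) :
    wirtingerDzbar (higgsCoeff u i) z
      = 2⁻¹ * (wirtingerDzbar (fun w => (u i w : ℂ)) z
          - wirtingerDzbar (fun w => (u (i - 1) w : ℂ)) z) * higgsCoeff u i z := by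
  have e : higgsCoeff u i = fun w =>
      Complex.exp (2⁻¹ * ((u i w : ℂ) - u (i - 1) w)) * if i = 0 then 1 else w⁻¹ := by
    funext w
    simp only [higgsCoeff, Complex.ofReal_exp]
    push_cast
    ring_nf
  have hh : DifferentiableAt ℂ (fun w : ℂ => if i = 0 then 1 else w⁻¹) z := by
    by_cases h : i = 0
    · simp [h]
    · simpa [h] using differentiableAt_inv hz
  have hg : DifferentiableAt ℝ (fun w => 2⁻¹ * ((u i w : ℂ) - u (i - 1) w)) z :=
    (hi.sub hi').const_mul _
  rw [e, wirtingerDzbar_cexp_mul hg hh, wirtingerDzbar_const_mul,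
    wirtingerDzbar_sub hi hi', mul_assoc]

lemma hitchin_second_eq_zero (hz : z ≠ 0)
    (hu : ∀ k, DifferentiableAt ℝ (fun w => (u k w : ℂ)) z) (i j : Fin (n + 1)) :
    wirtingerDzbar (fun w => higgsMat n u w i j) z
      + (AdoubleMat n u z * higgsMat n u z - higgsMat n u z * AdoubleMat n u z) i j = 0 := by
  have hΦ : ∀ w, higgsMat n u w i j = (if i - 1 = j then 1 else 0) * higgsCoeff u i w := by
    intro w
    simp [higgsMat_eq_diagonal_mul_permMatrix, diagonal_mul, PEquiv.toMatrix_apply, mul_comm]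
  simp only [hΦ, AdoubleMat, Matrix.smul_mul, Matrix.mul_smul, diagonal_mul, mul_diagonal,
    Matrix.sub_apply, Matrix.smul_apply, smul_eq_mul, wirtingerDzbar_const_mul,
    wirtingerDzbar_higgsCoeff hz (hu i) (hu (i - 1))]
  split_ifs with h
  · subst h
    ring
  · simp

end Toda

/-- **Proposition 5.4/5.6 of the paper.**  The Hitchin equations for
`(A', A'', Φ)` hold on `ℂ∖{0}` if and only if the `u_j` solve the tt*-Toda
system. -/
theorem hitchin_iff_ttToda (n : ℕ) (hn : 1 ≤ n)
    (u : Fin (n + 1) → ℂ → ℝ)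
    (hu : ∀ j, ContDiffOn ℝ 2 (u j) {(0 : ℂ)}ᶜ)
    (hanti : ∀ j, ∀ z : ℂ, z ≠ 0 → u j z + u (Fin.rev j) z = 0) :
    ((∀ z : ℂ, z ≠ 0 → ∀ i j : Fin (n + 1),
        wirtingerDz (fun w => AdoubleMat n u w i j) z
          - wirtingerDzbar (fun w => AprimeMat n u w i j) z
          + ((AprimeMat n u z * AdoubleMat n u z - AdoubleMat n u z * AprimeMat n u z)
              + (higgsMat n u z * cConj n (higgsMat n u z)
                  - cConj n (higgsMat n u z) * higgsMat n u z)) i j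
          = 0)
      ∧ (∀ z : ℂ, z ≠ 0 → ∀ i j : Fin (n + 1),
        wirtingerDzbar (fun w => higgsMat n u w i j) z
          + (AdoubleMat n u z * higgsMat n u z - higgsMat n u z * AdoubleMat n u z) i j
          = 0))
    ↔ (∀ z : ℂ, z ≠ 0 →
        (uzzbar (u 0) z
            = (Real.exp (u 0 z - u (Fin.last n) z) : ℂ)
              - ((‖z‖ : ℂ) ^ 2)⁻¹ * (Real.exp (u 1 z - u 0 z) : ℂ))
        ∧ (∀ j : Fin (n + 1), 1 ≤ (j : ℕ) → (j : ℕ) ≤ n - 1 →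
            uzzbar (u j) z
              = ((‖z‖ : ℂ) ^ 2)⁻¹ * (Real.exp (u j z - u (j - 1) z) : ℂ)
                - ((‖z‖ : ℂ) ^ 2)⁻¹ * (Real.exp (u (j + 1) z - u j z) : ℂ))
        ∧ (uzzbar (u (Fin.last n)) z
            = ((‖z‖ : ℂ) ^ 2)⁻¹
                * (Real.exp (u (Fin.last n) z - u (Fin.last n - 1) z) : ℂ)
              - (Real.exp (u 0 z - u (Fin.last n) z) : ℂ))) := by
  have hC : ∀ z : ℂ, z ≠ 0 → ∀ k, ContDiffAt ℝ 2 (fun w => (u k w : ℂ)) z := fun z hz k =>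
    Complex.ofRealCLM.contDiff.comp_contDiffAt z
      ((hu k).contDiffAt (isOpen_compl_singleton.mem_nhds hz))
  have hfirst : ∀ z : ℂ, z ≠ 0 → _ := fun z hz =>
    (hitchin_first_iff (hC z hz) (fun k => hanti k z hz)).trans (ttToda_iff u hn z).symm
  have hsecond : ∀ z : ℂ, z ≠ 0 → ∀ i j, _ := fun z hz =>
    hitchin_second_eq_zero hz fun k => (hC z hz k).differentiableAt (by norm_num)
  exact ⟨fun h z hz => (hfirst z hz).1 (h.1 z hz),
    fun h => ⟨fun z hz => (hfirst z hz).2 (h z hz), hsecond⟩⟩
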